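/- Let p ∈ ℝ[x₁,…,xₙ] be a homogeneous polynomial of degree d ≥ 1 that is hyperbolic with respect to e ∈ ℝⁿ, i.e., p(e) > 0 and for every q ∈ ℝⁿ the univariate polynomial λ ↦ p(q + λe) has only real roots. Then the directional derivative D_e p = Σⱼ eⱼ ∂p/∂xⱼ is hyperbolic with respect to e: (D_e p)(e) = d · p(e) > 0, and for every q ∈ ℝⁿ the univariate polynomial λ ↦ (D_e p)(q + λe) has only real roots. -/

import Mathlib

/-! Along the line `q + λ e`, the chain rule turns `D_e p` into the `λ`-derivative of
`g(λ) = p(q + λ e)`. By homogeneity the coefficient of `λ^d` in `g` is `p(e) ≠ 0`, so `g` is a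
real polynomial of positive degree with only real roots, i.e. it splits over `ℝ`. By Rolle's
theorem `g'` then also splits over `ℝ`, and it is nonzero, so all its complex roots are real.
Euler's identity gives `(D_e p)(e) = d p(e)`. -/

open Polynomial

/-- The restriction of a multivariate polynomial `p` to the line `λ ↦ x + λ e`,
as a univariate polynomial in `λ`. -/
noncomputable def lineRestrict {n : ℕ} (p : MvPolynomial (Fin n) ℝ)
    (x e : Fin n → ℝ) : Polynomial ℝ :=
  MvPolynomial.aeval (fun i => Polynomial.C (x i) + Polynomial.C (e i) * Polynomial.X) p

namespace Polynomial

variable {R : Type*} [CommSemiring R]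

theorem coeff_prod_pow_sum_of_natDegree_le_one {ι : Type*} (s : Finset ι) {f : ι → R[X]}
    (hf : ∀ i ∈ s, (f i).natDegree ≤ 1) (k : ι → ℕ) :
    (∏ i ∈ s, f i ^ k i).coeff (∑ i ∈ s, k i) = ∏ i ∈ s, (f i).coeff 1 ^ k i := by
  classical
  induction s using Finset.induction_on with
  | empty => simp
  | insert a s ha ih =>
    have hpow : ∀ i ∈ insert a s, (f i ^ k i).natDegree ≤ k i := fun i hi =>
      (natDegree_pow_le_of_le _ (hf i hi)).trans_eq (mul_one _)
    have hf' : ∀ i ∈ s, (f i).natDegree ≤ 1 := fun i hi => hf i (Finset.mem_insert_of_mem hi)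
    rw [Finset.prod_insert ha, Finset.prod_insert ha, Finset.sum_insert ha,
      coeff_mul_add_eq_of_natDegree_le (hpow a (Finset.mem_insert_self a s))
        ((natDegree_prod_le _ _).trans
          (Finset.sum_le_sum fun i hi => hpow i (Finset.mem_insert_of_mem hi))),
      ih hf', ← coeff_pow_of_natDegree_le (hf a (Finset.mem_insert_self a s)), mul_one]

end Polynomial

namespace MvPolynomial

variable {R σ : Type*} [CommSemiring R]

theorem derivative_aeval [Fintype σ] (f : σ → R[X]) (φ : MvPolynomial σ R) :
    derivative (aeval f φ) = ∑ j, aeval f (pderiv j φ) * derivative (f j) := by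
  induction φ using MvPolynomial.induction_on with
  | C a => simp
  | add φ ψ hφ hψ => simp only [map_add, hφ, hψ, add_mul, Finset.sum_add_distrib]
  | mul_X φ i ih =>
    classical
    simp only [map_mul, aeval_X, derivative_mul, ih, Derivation.leibniz, pderiv_X, Pi.single_apply,
      apply_ite, smul_eq_mul, mul_one, mul_zero, map_add, map_zero, add_mul, ite_mul, zero_mul,
      Finset.sum_add_distrib, Finset.sum_ite_eq, Finset.mem_univ, ↓reduceIte]
    rw [Finset.sum_mul, add_comm]
    exact congrArg _ (Finset.sum_congr rfl fun j _ => by ring)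

theorem IsHomogeneous.coeff_aeval_of_natDegree_le_one {φ : MvPolynomial σ R} {d : ℕ}
    (hφ : φ.IsHomogeneous d) {f : σ → R[X]} (hf : ∀ i, (f i).natDegree ≤ 1) :
    (MvPolynomial.aeval f φ).coeff d = eval (fun i => (f i).coeff 1) φ := by
  rw [φ.as_sum, map_sum, finsetSum_coeff, map_sum]
  refine Finset.sum_congr rfl fun m hm => ?_
  have hdeg : ∑ i ∈ m.support, m i = d := by
    simpa [Finsupp.weight_apply, Finsupp.sum] using hφ (mem_support_iff.mp hm)
  rw [aeval_monomial, eval_monomial, Polynomial.algebraMap_eq, Polynomial.coeff_C_mul,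
    Finsupp.prod, Finsupp.prod, ← hdeg,
    coeff_prod_pow_sum_of_natDegree_le_one _ fun i _ => hf i]

end MvPolynomial

-- The zero polynomial is not real rooted: every complex number is a root of it.
def IsRealRooted (f : ℝ[X]) : Prop := ∀ z : ℂ, aeval z f = 0 → z.im = 0

theorem IsRealRooted.splits {f : ℝ[X]} (hf : IsRealRooted f) : f.Splits := by
  refine Splits.of_splits_map (algebraMap ℝ ℂ) (IsAlgClosed.splits _) fun z hz => ⟨z.re, ?_⟩
  have hz0 : aeval z f = 0 := by
    rw [← eval_map_algebraMap]
    exact (mem_roots'.mp hz).2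
  exact Complex.ext rfl (hf z hz0).symm

theorem Polynomial.Splits.isRealRooted {f : ℝ[X]} (hf : f.Splits) (hf0 : f ≠ 0) :
    IsRealRooted f := fun z hz => by
  obtain ⟨x, rfl⟩ := hf.mem_range_of_isRoot hf0 (i := algebraMap ℝ ℂ)
    (by rwa [IsRoot, eval_map_algebraMap])
  exact Complex.ofReal_im x

-- Rolle: `f'` has at most one root fewer than `f`, and degree at least one less.
theorem Polynomial.Splits.derivative {f : ℝ[X]} (hf : f.Splits) : f.derivative.Splits := by
  rw [splits_iff_card_roots] at hf ⊢
  have := card_roots_le_derivative f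
  have := card_roots' f.derivative
  have := natDegree_derivative_le f
  omega

theorem IsRealRooted.derivative {f : ℝ[X]} (hf : IsRealRooted f) (hdeg : 0 < f.natDegree) :
    IsRealRooted (derivative f) :=
  hf.splits.derivative.isRealRooted fun h => hdeg.ne' (derivative_eq_zero.mp h)

section lineRestrict

variable {n : ℕ} (p : MvPolynomial (Fin n) ℝ) (q e : Fin n → ℝ)

theorem lineRestrict_directionalDeriv :
    lineRestrict (∑ j, e j • MvPolynomial.pderiv j p) q e =
      derivative (lineRestrict p q e) := by
  rw [lineRestrict, lineRestrict, MvPolynomial.derivative_aeval, map_sum]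
  refine Finset.sum_congr rfl fun j _ => ?_
  rw [map_smul, smul_eq_C_mul, derivative_add, derivative_C, zero_add, derivative_C_mul_X, mul_comm]

variable {p} {d : ℕ}

theorem MvPolynomial.IsHomogeneous.coeff_lineRestrict (hp : p.IsHomogeneous d) :
    (lineRestrict p q e).coeff d = MvPolynomial.eval e p := by
  rw [lineRestrict, hp.coeff_aeval_of_natDegree_le_one fun i =>
    add_comm (Polynomial.C (q i)) _ ▸ natDegree_linear_le]
  congr 2 with i
  simp

theorem MvPolynomial.IsHomogeneous.eval_directionalDeriv (hp : p.IsHomogeneous d) :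
    MvPolynomial.eval e (∑ j, e j • MvPolynomial.pderiv j p) = d * MvPolynomial.eval e p := by
  simpa using congrArg (MvPolynomial.eval e) hp.sum_X_mul_pderiv

end lineRestrict

theorem stmt4 {n : ℕ} (p : MvPolynomial (Fin n) ℝ) (d : ℕ) (hd : 1 ≤ d)
    (hhom : p.IsHomogeneous d) (e : Fin n → ℝ)
    (hpos : 0 < MvPolynomial.eval e p)
    (hreal : ∀ q : Fin n → ℝ, ∀ z : ℂ,
      Polynomial.aeval z (lineRestrict p q e) = 0 → z.im = 0) :
    MvPolynomial.eval e (∑ j, e j • MvPolynomial.pderiv j p)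
        = (d : ℝ) * MvPolynomial.eval e p ∧
    0 < MvPolynomial.eval e (∑ j, e j • MvPolynomial.pderiv j p) ∧
    ∀ q : Fin n → ℝ, ∀ z : ℂ,
      Polynomial.aeval z
        (lineRestrict (∑ j, e j • MvPolynomial.pderiv j p) q e) = 0 → z.im = 0 := by
  have heuler := hhom.eval_directionalDeriv e
  refine ⟨heuler, heuler ▸ mul_pos (by exact_mod_cast hd) hpos, fun q => ?_⟩
  have hlead : (lineRestrict p q e).coeff d ≠ 0 := hhom.coeff_lineRestrict q e ▸ hpos.ne'
  rw [lineRestrict_directionalDeriv]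
  exact IsRealRooted.derivative (hreal q) (hd.trans (le_natDegree_of_ne_zero hlead))
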